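/- For any formula ψ_{[μ]} built from a class [μ] ∈ 𝔽ₙ as the conjunction (⊥ ⋈₀ X_{σ(1)}) ∧ (X_{σ(1)} ⋈₁ X_{σ(2)}) ∧ ⋯ ∧ (X_{σ(n)} ⋈ₙ ⊤), where ⋈ᵢ is ◁ if ⪯ᵢ is < and ↔ otherwise, the set of classes [ν] ∈ 𝔽ₙ with ν(ψ_{[μ]}) = 1 equals the downset ↓[μ] in the forest 𝔽ₙ. -/

import Mathlib

open unitInterval

/-- The extended value sequence 0, μ(X_{sg(1)}), …, μ(X_{sg(n)}), 1. -/
def seq (n : ℕ) (μ : Fin n → I) (sg : Equiv.Perm (Fin n)) : Fin (n + 2) → I :=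
  fun i =>
    if h0 : (i : ℕ) = 0 then 0
    else if h : (i : ℕ) ≤ n then μ (sg ⟨(i : ℕ) - 1, by omega⟩) else 1

/-- μ ≡ₙ ν : some permutation sorts both, with identical equality/strictness pattern. -/
def nEquiv (n : ℕ) (μ ν : Fin n → I) : Prop :=
  ∃ sg : Equiv.Perm (Fin n),
    Monotone (seq n μ sg) ∧ Monotone (seq n ν sg) ∧
      ∀ i : Fin (n + 1),
        (seq n μ sg i.castSucc = seq n μ sg i.succ ↔
          seq n ν sg i.castSucc = seq n ν sg i.succ)

/-- The forest order on assignments: [μ] ≤ [ν] iff some permutation sorts both, the patterns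
agree up to index k, and μ's relations are equalities afterwards. -/
def leAssign (n : ℕ) (μ ν : Fin n → I) : Prop :=
  ∃ sg : Equiv.Perm (Fin n),
    Monotone (seq n μ sg) ∧ Monotone (seq n ν sg) ∧
      ∃ k : ℕ, k ≤ n ∧
        (∀ i : Fin (n + 1), (i : ℕ) ≤ k →
          (seq n μ sg i.castSucc = seq n μ sg i.succ ↔
            seq n ν sg i.castSucc = seq n ν sg i.succ)) ∧
        (∀ i : Fin (n + 1), k < (i : ℕ) →
          seq n μ sg i.castSucc = seq n μ sg i.succ)

/-- Formulas of Gödel logic over n variables. -/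
inductive Fml (n : ℕ) : Type
  | var : Fin n → Fml n
  | bot : Fml n
  | top : Fml n
  | and : Fml n → Fml n → Fml n
  | or : Fml n → Fml n → Fml n
  | imp : Fml n → Fml n → Fml n
  | neg : Fml n → Fml n

open Classical in
/-- Gödel semantics. -/
noncomputable def eval {n : ℕ} (μ : Fin n → I) : Fml n → I
  | .var i => μ i
  | .bot => 0
  | .top => 1
  | .and a b => min (eval μ a) (eval μ b)
  | .or a b => max (eval μ a) (eval μ b)
  | .imp a b => if eval μ a ≤ eval μ b then 1 else eval μ b
  | .neg a => if eval μ a ≤ (0 : I) then 1 else 0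

def bigOr {n : ℕ} (l : List (Fml n)) : Fml n := l.foldr Fml.or Fml.bot
def bigAnd {n : ℕ} (l : List (Fml n)) : Fml n := l.foldr Fml.and Fml.top

/-- The derived connective α ◁ β := (β → α) → β. -/
def tri {n : ℕ} (a b : Fml n) : Fml n := .imp (.imp b a) b

def iffF {n : ℕ} (a b : Fml n) : Fml n := .and (.imp a b) (.imp b a)

def fmlTerm {n : ℕ} (sg : Equiv.Perm (Fin n)) : Fin (n + 2) → Fml n := fun i =>
  if h0 : (i : ℕ) = 0 then .bot
  else if h : (i : ℕ) ≤ n then .var (sg ⟨(i : ℕ) - 1, by omega⟩) else .top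

open Classical in
/-- The normal-form formula ψ_{[μ]}. -/
noncomputable def psi {n : ℕ} (μ : Fin n → I) (sg : Equiv.Perm (Fin n)) : Fml n :=
  bigAnd ((List.finRange (n + 1)).map fun i =>
    if seq n μ sg i.castSucc = seq n μ sg i.succ then
      iffF (fmlTerm sg i.castSucc) (fmlTerm sg i.succ)
    else tri (fmlTerm sg i.castSucc) (fmlTerm sg i.succ))

/-!
Read along the ordering `sg` of `μ`, `ν(ψ_{[μ]}) = 1` says: every equality step of `μ` is an
equality step of `ν`, and every strict step of `μ` is strict for `ν` unless `ν` has already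
reached `1` there. Cutting at the first position where `ν` reaches `1` yields the index `k` of
`leAssign`. Conversely, a permutation `sg'` witnessing `leAssign` sorts `μ` to the same sequence
as `sg` (sorted tuples are unique), and `ν` is constant on the level sets of `μ`, so `sg` also
sorts `ν` to the same sequence as `sg'` and the step conditions transfer.
-/

namespace Fin

variable {α β : Type*} {m : ℕ}

theorem apply_eq_of_forall_succ_eq (g : Fin (m + 1) → α) {p q : Fin (m + 1)} (hpq : p ≤ q)
    (hg : ∀ i : Fin m, p ≤ i.castSucc → i.succ ≤ q → g i.castSucc = g i.succ) :
    g p = g q := by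
  induction q using Fin.induction with
  | zero => rw [le_zero_iff.mp hpq]
  | succ i ih =>
    rcases hpq.lt_or_eq with hp | rfl
    · have hpi : p ≤ i.castSucc := le_castSucc_iff.mpr hp
      rw [ih hpi fun j hj hji => hg j hj (hji.trans (castSucc_le_succ i))]
      exact hg i hpi le_rfl
    · rfl

theorem apply_eq_of_apply_eq_of_monotone [PartialOrder α] {f : Fin (m + 1) → α}
    (hf : Monotone f) {g : Fin (m + 1) → β}
    (hfg : ∀ i : Fin m, f i.castSucc = f i.succ → g i.castSucc = g i.succ)
    {p q : Fin (m + 1)} (hpq : f p = f q) : g p = g q := by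
  wlog hle : p ≤ q generalizing p q
  · exact (this hpq.symm (le_of_not_ge hle)).symm
  refine apply_eq_of_forall_succ_eq g hle fun i hpi hiq => hfg i (le_antisymm ?_ ?_)
  · exact hf (castSucc_le_succ i)
  · calc f i.succ ≤ f q := hf hiq
      _ = f p := hpq.symm
      _ ≤ f i.castSucc := hf hpi

theorem exists_succ_eq_and_forall_castSucc_ne (f : Fin (m + 1) → α)
    {a : α} (h0 : f 0 ≠ a) (hlast : f (last m) = a) :
    ∃ k : Fin m, f k.succ = a ∧ ∀ i ≤ k, f i.castSucc ≠ a := by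
  obtain ⟨p, hp, hmin⟩ := wellFounded_lt.has_min {p | f p = a} ⟨_, hlast⟩
  obtain ⟨k, rfl⟩ := exists_succ_eq.mpr (ne_of_apply_ne f (hp ▸ h0)).symm
  exact ⟨k, hp, fun i hik hi => hmin _ hi (castSucc_lt_succ_iff.mpr hik)⟩

end Fin

section Seq

variable {n : ℕ} (μ : Fin n → I) (sg : Equiv.Perm (Fin n))

@[simp]
theorem seq_zero : seq n μ sg 0 = 0 := rfl

@[simp]
theorem seq_last : seq n μ sg (Fin.last (n + 1)) = 1 := by
  simp [seq]

@[simp]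
theorem seq_succ_castSucc (j : Fin n) : seq n μ sg j.castSucc.succ = μ (sg j) := by
  simp [seq]

theorem seq_congr {ν : Fin n → I} {sg' : Equiv.Perm (Fin n)} (h : μ ∘ sg = ν ∘ sg') :
    seq n μ sg = seq n ν sg' := by
  funext i
  simp only [seq]
  split_ifs
  · rfl
  · exact congrFun h _
  · rfl

variable {μ sg}

theorem monotone_comp_of_monotone_seq (h : Monotone (seq n μ sg)) : Monotone (μ ∘ sg) := by
  intro j j' hjj'
  simpa using h (Fin.succ_le_succ_iff.mpr (Fin.castSucc_le_castSucc_iff.mpr hjj'))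

theorem comp_eq_of_monotone_seq {sg' : Equiv.Perm (Fin n)} (h : Monotone (seq n μ sg))
    (h' : Monotone (seq n μ sg')) : μ ∘ sg = μ ∘ sg' :=
  Tuple.unique_monotone (monotone_comp_of_monotone_seq h) (monotone_comp_of_monotone_seq h')

end Seq

section Eval

variable {n : ℕ} (ν : Fin n → I)

theorem unitInterval.min_eq_one_iff {a b : I} : min a b = 1 ↔ a = 1 ∧ b = 1 := by
  refine ⟨fun h => ⟨?_, ?_⟩, fun ⟨ha, hb⟩ => by rw [ha, hb, min_self]⟩
  · exact le_antisymm le_one' (h ▸ min_le_left a b)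
  · exact le_antisymm le_one' (h ▸ min_le_right a b)

theorem eval_imp_eq_one_iff (a b : Fml n) :
    eval ν (.imp a b) = 1 ↔ eval ν a ≤ eval ν b := by
  simp only [eval]
  split_ifs with hab
  · simpa using hab
  · exact iff_of_false (fun h => hab (h ▸ le_one')) hab

theorem eval_iffF_eq_one_iff (a b : Fml n) : eval ν (iffF a b) = 1 ↔ eval ν a = eval ν b := by
  rw [iffF, eval, unitInterval.min_eq_one_iff, eval_imp_eq_one_iff, eval_imp_eq_one_iff,
    le_antisymm_iff]

theorem eval_tri_eq_one_iff (a b : Fml n) :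
    eval ν (tri a b) = 1 ↔ eval ν a < eval ν b ∨ eval ν b = 1 := by
  rw [tri, eval_imp_eq_one_iff]
  rcases le_or_gt (eval ν b) (eval ν a) with hba | hab
  · rw [(eval_imp_eq_one_iff ν b a).mpr hba, le_one'.ge_iff_eq, or_iff_right hba.not_gt]
  · simp only [eval, if_neg hab.not_ge, hab.le, hab, true_or]

theorem eval_bigAnd_eq_one_iff (l : List (Fml n)) :
    eval ν (bigAnd l) = 1 ↔ ∀ a ∈ l, eval ν a = 1 := by
  induction l with
  | nil => simp [bigAnd, eval]
  | cons a l ih => simp [bigAnd, eval, unitInterval.min_eq_one_iff, ← ih]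

theorem eval_fmlTerm (sg : Equiv.Perm (Fin n)) (i : Fin (n + 2)) :
    eval ν (fmlTerm sg i) = seq n ν sg i := by
  simp only [fmlTerm, seq]
  split_ifs <;> rfl

end Eval

section Psi

variable {n : ℕ}

def PsiSteps (μ ν : Fin n → I) (sg : Equiv.Perm (Fin n)) : Prop :=
  ∀ i : Fin (n + 1),
    (seq n μ sg i.castSucc = seq n μ sg i.succ →
      seq n ν sg i.castSucc = seq n ν sg i.succ) ∧
    (seq n μ sg i.castSucc ≠ seq n μ sg i.succ →
      seq n ν sg i.castSucc < seq n ν sg i.succ ∨ seq n ν sg i.succ = 1)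

theorem eval_psi_eq_one_iff_psiSteps (μ ν : Fin n → I) (sg : Equiv.Perm (Fin n)) :
    eval ν (psi μ sg) = 1 ↔ PsiSteps μ ν sg := by
  simp only [psi, eval_bigAnd_eq_one_iff, List.forall_mem_map, List.mem_finRange, true_imp_iff,
    PsiSteps, ← ite_prop_iff_and, apply_ite (eval ν · = 1), eval_iffF_eq_one_iff,
    eval_tri_eq_one_iff, eval_fmlTerm]

end Psi

section Transfer

variable {n : ℕ} {μ ν : Fin n → I} {sg sg' : Equiv.Perm (Fin n)}

theorem PsiSteps.monotone (H : PsiSteps μ ν sg) : Monotone (seq n ν sg) := by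
  refine Fin.monotone_iff_le_succ.mpr fun i => ?_
  by_cases hμi : seq n μ sg i.castSucc = seq n μ sg i.succ
  · exact ((H i).1 hμi).le
  · rcases (H i).2 hμi with hlt | hone
    · exact hlt.le
    · exact hone ▸ le_one'

theorem leAssign_of_psiSteps (hμ : Monotone (seq n μ sg)) (H : PsiSteps μ ν sg) :
    leAssign n ν μ := by
  have hν := H.monotone
  obtain ⟨k, hk, hbelow⟩ :=
    Fin.exists_succ_eq_and_forall_castSucc_ne (seq n ν sg) (by simp) (seq_last ν sg)
  have habove : ∀ p, k.succ ≤ p → seq n ν sg p = 1 :=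
    fun p hp => le_antisymm le_one' (hk ▸ hν hp)
  refine ⟨sg, hν, hμ, k, k.is_le, fun i hik => ⟨fun hνi => ?_, (H i).1⟩, fun i hki => ?_⟩
  · by_contra hμi
    rcases (H i).2 hμi with hlt | hone
    · exact hlt.ne hνi
    · exact hbelow i hik (hνi.trans hone)
  · rw [habove _ (Fin.succ_le_castSucc_iff.mpr hki),
      habove _ (Fin.succ_le_castSucc_iff.mpr hki |>.trans (Fin.castSucc_le_succ i))]

theorem apply_eq_of_apply_eq_of_steps (hμ : Monotone (seq n μ sg))
    (heq : ∀ i : Fin (n + 1),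
      seq n μ sg i.castSucc = seq n μ sg i.succ → seq n ν sg i.castSucc = seq n ν sg i.succ)
    {x y : Fin n} (hxy : μ x = μ y) : ν x = ν y := by
  simpa using Fin.apply_eq_of_apply_eq_of_monotone hμ heq
    (p := (sg.symm x).castSucc.succ) (q := (sg.symm y).castSucc.succ) (by simpa using hxy)

theorem psiSteps_of_leAssign (hμ : Monotone (seq n μ sg)) (hle : leAssign n ν μ) :
    PsiSteps μ ν sg := by
  obtain ⟨sg', hν', hμ', k, -, hiff, hafter⟩ := hle
  have heq : ∀ i : Fin (n + 1), seq n μ sg' i.castSucc = seq n μ sg' i.succ →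
      seq n ν sg' i.castSucc = seq n ν sg' i.succ :=
    fun i hμi => (le_or_gt (i : ℕ) k).elim (fun hik => (hiff i hik).mpr hμi) (hafter i)
  have hμsg := comp_eq_of_monotone_seq hμ hμ'
  have hνsg : ν ∘ sg = ν ∘ sg' :=
    funext fun j => apply_eq_of_apply_eq_of_steps hμ' heq (congrFun hμsg j)
  rw [PsiSteps, seq_congr μ sg hμsg, seq_congr ν sg hνsg]
  refine fun i => ⟨heq i, fun hμi => ?_⟩
  rcases le_or_gt (i : ℕ) k with hik | hki
  · exact .inl ((hν' (Fin.castSucc_le_succ i)).lt_of_ne (mt (hiff i hik).mp hμi))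
  · refine .inr ((Fin.apply_eq_of_forall_succ_eq _ (Fin.le_last _) fun j hj _ => ?_).trans
      (seq_last ν sg'))
    exact hafter j (hki.trans (Fin.succ_le_castSucc_iff.mp hj))

end Transfer

theorem eval_psi_eq_one_iff_le {n : ℕ} (μ : Fin n → I) (sg : Equiv.Perm (Fin n))
    (h : Monotone (seq n μ sg)) (ν : Fin n → I) :
    eval ν (psi μ sg) = 1 ↔ leAssign n ν μ := by
  rw [eval_psi_eq_one_iff_psiSteps]
  exact ⟨leAssign_of_psiSteps h, psiSteps_of_leAssign h⟩
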